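/- Let G : Ω → ℝ^d be bounded, continuous, and Lipschitz along constant shifts (there is L ≥ 0 with ‖G(V + x𝟙) − G(V + y𝟙)‖ ≤ L‖x − y‖ for all V ∈ Ω, x, y ∈ ℝ^d), and for W ∈ Ω let φ_W : ℝ → ℝ^d be the unique continuous solution of φ_W(s) = ∫₀^s G(θ_v W + φ_W(v)𝟙) dv. If W_n → W uniformly on compact subsets of ℝ, then φ_{W_n} → φ_W uniformly on compact subsets of ℝ; consequently, for every T > 0, θ_s W_n + φ_{W_n}(s)𝟙 → θ_s W + φ_W(s)𝟙 uniformly on compacts, uniformly in s ∈ [−T, T]. -/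

import Mathlib

open MeasureTheory Filter Topology

/-- The time shift `θ_s` on the path space `C(ℝ, ℝ^d)`: `(θ_s W)(u) = W(u + s)`. -/
noncomputable def pathShift {d : ℕ} (s : ℝ) (W : C(ℝ, EuclideanSpace ℝ (Fin d))) :
    C(ℝ, EuclideanSpace ℝ (Fin d)) :=
  W.comp ⟨fun u => u + s, by continuity⟩

/-!
Both `φ_{W_n}` and `φ_W` solve ODEs `φ' = G(θ_s V + φ 𝟙)`. Driving the solution `φ_W` by the path
`W_n` instead of `W` perturbs its vector field by an amount that tends to `0` uniformly on
`[-T, T]`, because `(V, s) ↦ G(θ_s V + φ_W(s) 𝟙)` is jointly continuous for the compact-open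
topology. The Lipschitz bound in the constant then feeds Grönwall's inequality, run forwards and
backwards from time `0` where both solutions vanish, which controls `φ_{W_n} - φ_W` on `[-T, T]`.
The flow statement follows by adding the uniform convergence of `(s, u) ↦ W_n(u + s)`.
-/

section Calculus

variable {E : Type*} [NormedAddCommGroup E] [NormedSpace ℝ E]

theorem norm_le_gronwallBound_of_hasDerivAt_Icc {f f' : ℝ → E} {δ K ε T : ℝ}
    (hδ : 0 ≤ δ) (hK : 0 ≤ K) (hε : 0 ≤ ε)
    (hf : ∀ s ∈ Set.Icc 0 T, HasDerivAt f (f' s) s) (h0 : ‖f 0‖ ≤ δ)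
    (bound : ∀ s ∈ Set.Icc 0 T, ‖f' s‖ ≤ K * ‖f s‖ + ε) :
    ∀ s ∈ Set.Icc 0 T, ‖f s‖ ≤ gronwallBound δ K ε T := fun s hs =>
  calc ‖f s‖ ≤ gronwallBound δ K ε (s - 0) :=
        norm_le_gronwallBound_of_norm_deriv_right_le
          (fun u hu => (hf u hu).continuousAt.continuousWithinAt)
          (fun u hu => (hf u (Set.Ico_subset_Icc_self hu)).hasDerivWithinAt) h0
          (fun u hu => bound u (Set.Ico_subset_Icc_self hu)) s hs
    _ ≤ gronwallBound δ K ε T := gronwallBound_mono hδ hε hK (by linarith [hs.2])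

theorem norm_le_gronwallBound_of_hasDerivAt_Icc_neg {f f' : ℝ → E} {δ K ε T : ℝ}
    (hδ : 0 ≤ δ) (hK : 0 ≤ K) (hε : 0 ≤ ε)
    (hf : ∀ s ∈ Set.Icc (-T) T, HasDerivAt f (f' s) s) (h0 : ‖f 0‖ ≤ δ)
    (bound : ∀ s ∈ Set.Icc (-T) T, ‖f' s‖ ≤ K * ‖f s‖ + ε) :
    ∀ s ∈ Set.Icc (-T) T, ‖f s‖ ≤ gronwallBound δ K ε T := by
  have hpos : Set.Icc 0 T ⊆ Set.Icc (-T) T := fun s hs => ⟨by linarith [hs.1, hs.2], hs.2⟩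
  have hneg : ∀ s ∈ Set.Icc 0 T, -s ∈ Set.Icc (-T) T := fun s hs =>
    ⟨by linarith [hs.2], by linarith [hs.1, hs.2]⟩
  intro s hs
  rcases le_total 0 s with hs0 | hs0
  · exact norm_le_gronwallBound_of_hasDerivAt_Icc hδ hK hε (fun u hu => hf u (hpos hu)) h0
      (fun u hu => bound u (hpos hu)) s ⟨hs0, hs.2⟩
  · have hback := norm_le_gronwallBound_of_hasDerivAt_Icc (f := fun u => f (-u))
      (f' := fun u => -f' (-u)) hδ hK hε
      (fun u hu => by
        simpa [Function.comp_def] using (hf (-u) (hneg u hu)).scomp u (hasDerivAt_neg u))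
      (by simpa using h0) (fun u hu => by simpa using bound (-u) (hneg u hu))
      (-s) ⟨by linarith, by linarith [hs.1]⟩
    simpa using hback

theorem hasDerivAt_of_eq_intervalIntegral [CompleteSpace E] {f g : ℝ → E} (hf : Continuous f)
    (hg : ∀ s, g s = ∫ v in (0:ℝ)..s, f v) (s : ℝ) : HasDerivAt g (f s) s := by
  rw [funext hg]
  exact (hf.integral_hasStrictDerivAt 0 s).hasDerivAt

end Calculus

theorem tendstoUniformlyOn_of_continuous_uncurry {X Y Z : Type*} [TopologicalSpace X]
    [TopologicalSpace Y] [UniformSpace Z] {ι : Type*} {l : Filter ι} {f : X → Y → Z}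
    (hf : Continuous (Function.uncurry f)) {x : ι → X} {x₀ : X} (hx : Tendsto x l (𝓝 x₀))
    {K : Set Y} (hK : IsCompact K) :
    TendstoUniformlyOn (fun i => f (x i)) (f x₀) l K := by
  let F : X → C(Y, Z) := fun a => ⟨f a, hf.comp (continuous_const.prodMk continuous_id)⟩
  have hF : Continuous F := ContinuousMap.continuous_of_continuous_uncurry F hf
  exact ContinuousMap.tendsto_iff_forall_isCompact_tendstoUniformlyOn.1
    ((hF.tendsto x₀).comp hx) K hK

theorem continuous_pathShift {d : ℕ} :
    Continuous fun p : C(ℝ, EuclideanSpace ℝ (Fin d)) × ℝ => pathShift p.2 p.1 := by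
  let τ : ℝ → C(ℝ, ℝ) := fun s => ⟨fun u => u + s, by fun_prop⟩
  have hτ : Continuous τ := ContinuousMap.continuous_of_continuous_uncurry τ <| by
    show Continuous fun q : ℝ × ℝ => q.2 + q.1
    fun_prop
  show Continuous fun p : C(ℝ, EuclideanSpace ℝ (Fin d)) × ℝ => p.1.comp (τ p.2)
  exact ContinuousMap.continuous_comp'.comp ((hτ.comp continuous_snd).prodMk continuous_fst)

section Flow

variable {d : ℕ} {G : C(ℝ, EuclideanSpace ℝ (Fin d)) → EuclideanSpace ℝ (Fin d)}

theorem Continuous.comp_pathShift_add_const (hGc : Continuous G)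
    {x : ℝ → EuclideanSpace ℝ (Fin d)} (hx : Continuous x) :
    Continuous fun p : C(ℝ, EuclideanSpace ℝ (Fin d)) × ℝ =>
      G (pathShift p.2 p.1 + ContinuousMap.const ℝ (x p.2)) :=
  hGc.comp <| continuous_pathShift.add <|
    ContinuousMap.continuous_const'.comp (hx.comp continuous_snd)

variable {L : ℝ} {φ : C(ℝ, EuclideanSpace ℝ (Fin d)) → ℝ → EuclideanSpace ℝ (Fin d)}

theorem tendstoUniformlyOn_Icc_solution_of_tendsto (hGc : Continuous G) (hL : 0 ≤ L)
    (hLip : ∀ (V : C(ℝ, EuclideanSpace ℝ (Fin d))) (x y : EuclideanSpace ℝ (Fin d)),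
      ‖G (V + ContinuousMap.const ℝ x) - G (V + ContinuousMap.const ℝ y)‖ ≤ L * ‖x - y‖)
    (hφ : ∀ W, Continuous (φ W) ∧
      ∀ s : ℝ, φ W s = ∫ v in (0:ℝ)..s, G (pathShift v W + ContinuousMap.const ℝ (φ W v)))
    {Wn : ℕ → C(ℝ, EuclideanSpace ℝ (Fin d))} {W : C(ℝ, EuclideanSpace ℝ (Fin d))}
    (hWn : Tendsto Wn atTop (𝓝 W)) (T : ℝ) :
    TendstoUniformlyOn (fun n => φ (Wn n)) (φ W) atTop (Set.Icc (-T) T) := by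
  set g : C(ℝ, EuclideanSpace ℝ (Fin d)) → C(ℝ, EuclideanSpace ℝ (Fin d)) → ℝ →
      EuclideanSpace ℝ (Fin d) :=
    fun U V v => G (pathShift v V + ContinuousMap.const ℝ (φ U v))
  have hφ' : ∀ V s, HasDerivAt (φ V) (g V V s) s := fun V =>
    hasDerivAt_of_eq_intervalIntegral
      ((hGc.comp_pathShift_add_const (hφ V).1).comp (continuous_const.prodMk continuous_id))
      (hφ V).2
  have hφ0 : ∀ V, φ V 0 = 0 := fun V => by rw [(hφ V).2 0, intervalIntegral.integral_same]
  have hdrift : TendstoUniformlyOn (fun n => g W (Wn n)) (g W W) atTop (Set.Icc (-T) T) :=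
    tendstoUniformlyOn_of_continuous_uncurry (hGc.comp_pathShift_add_const (hφ W).1) hWn
      isCompact_Icc
  have hbound : Tendsto (fun η => gronwallBound 0 L η T) (𝓝 0) (𝓝 0) := by
    simpa [gronwallBound_ε0_δ0] using (gronwallBound_continuous_ε 0 L T).tendsto 0
  rw [Metric.tendstoUniformlyOn_iff] at hdrift ⊢
  intro ε hε
  obtain ⟨η, hηε, hη⟩ := (((hbound.eventually_lt_const hε).filter_mono nhdsWithin_le_nhds).and
    (self_mem_nhdsWithin : Set.Ioi (0 : ℝ) ∈ 𝓝[>] 0)).exists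
  filter_upwards [hdrift η hη] with n hn s hs
  -- Pass through the field of `W`'s solution driven by `Wn n`: the first step only moves the
  -- constant (Lipschitz), the second only the path (uniformly small).
  have hfield : ∀ v ∈ Set.Icc (-T) T,
      ‖g (Wn n) (Wn n) v - g W W v‖ ≤ L * ‖φ (Wn n) v - φ W v‖ + η := fun v hv =>
    calc ‖g (Wn n) (Wn n) v - g W W v‖
        ≤ ‖g (Wn n) (Wn n) v - g W (Wn n) v‖ + ‖g W (Wn n) v - g W W v‖ :=
          norm_sub_le_norm_sub_add_norm_sub _ _ _
      _ ≤ L * ‖φ (Wn n) v - φ W v‖ + η :=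
          add_le_add (hLip _ _ _) (by rw [← dist_eq_norm, dist_comm]; exact (hn v hv).le)
  have hgron := norm_le_gronwallBound_of_hasDerivAt_Icc_neg le_rfl hL (le_of_lt hη)
    (fun v _ => (hφ' (Wn n) v).sub (hφ' W v)) (by simp [hφ0]) hfield s hs
  rw [dist_comm, dist_eq_norm]
  exact hgron.trans_lt hηε

end Flow

theorem stmt_3_general (d : ℕ)
    (G : C(ℝ, EuclideanSpace ℝ (Fin d)) → EuclideanSpace ℝ (Fin d))
    (hGc : Continuous G)
    (L : ℝ) (hL : 0 ≤ L)
    (hLip : ∀ (V : C(ℝ, EuclideanSpace ℝ (Fin d))) (x y : EuclideanSpace ℝ (Fin d)),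
      ‖G (V + ContinuousMap.const ℝ x) - G (V + ContinuousMap.const ℝ y)‖ ≤ L * ‖x - y‖)
    (φ : C(ℝ, EuclideanSpace ℝ (Fin d)) → ℝ → EuclideanSpace ℝ (Fin d))
    (hφ : ∀ W, Continuous (φ W) ∧
      ∀ s : ℝ, φ W s = ∫ v in (0:ℝ)..s, G (pathShift v W + ContinuousMap.const ℝ (φ W v)))
    (Wn : ℕ → C(ℝ, EuclideanSpace ℝ (Fin d))) (W : C(ℝ, EuclideanSpace ℝ (Fin d)))
    (hWn : ∀ K : Set ℝ, IsCompact K →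
      TendstoUniformlyOn (fun n u => Wn n u) (fun u => W u) atTop K) :
    (∀ K : Set ℝ, IsCompact K →
      TendstoUniformlyOn (fun n s => φ (Wn n) s) (φ W) atTop K) ∧
    (∀ T : ℝ, 0 < T → ∀ K : Set ℝ, IsCompact K →
      TendstoUniformlyOn
        (fun n (p : ℝ × ℝ) =>
          (pathShift p.1 (Wn n) + ContinuousMap.const ℝ (φ (Wn n) p.1)) p.2)
        (fun p => (pathShift p.1 W + ContinuousMap.const ℝ (φ W p.1)) p.2)
        atTop (Set.Icc (-T) T ×ˢ K)) := by
  have hIcc := tendstoUniformlyOn_Icc_solution_of_tendsto hGc hL hLip hφ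
    (ContinuousMap.tendsto_iff_forall_isCompact_tendstoUniformlyOn.2 hWn)
  refine ⟨fun K hK => ?_, fun T _ K hK => ?_⟩
  · obtain ⟨r, hr⟩ := hK.isBounded.subset_closedBall 0
    rw [Real.closedBall_eq_Icc, zero_sub, zero_add] at hr
    exact (hIcc r).mono hr
  · let S := Set.Icc (-T) T ×ˢ K
    let shift : ℝ × ℝ → ℝ := fun p => p.2 + p.1
    have hpath : TendstoUniformlyOn (fun n p => Wn n (shift p)) (fun p => W (shift p)) atTop S :=
      ((hWn _ ((isCompact_Icc.prod hK).image (by fun_prop))).comp shift).mono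
        fun p hp => Set.mem_image_of_mem shift hp
    have hsol : TendstoUniformlyOn (fun n p => φ (Wn n) p.1) (fun p => φ W p.1) atTop S :=
      ((hIcc T).comp Prod.fst).mono fun p hp => hp.1
    exact hpath.fun_add hsol

/-- Continuous dependence of the solution `φ_W` of the integral equation on the path `W`:
convergence of `W_n` to `W` uniformly on compacts implies convergence of `φ_{W_n}` to
`φ_W` uniformly on compacts, and hence convergence of the flows
`θ_s W_n + φ_{W_n}(s)𝟙 → θ_s W + φ_W(s)𝟙` uniformly on compacts, uniformly in
`s ∈ [−T, T]`. -/
theorem stmt_3 (d : ℕ)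
    (G : C(ℝ, EuclideanSpace ℝ (Fin d)) → EuclideanSpace ℝ (Fin d))
    (hGb : ∃ M : ℝ, ∀ W, ‖G W‖ ≤ M) (hGc : Continuous G)
    (L : ℝ) (hL : 0 ≤ L)
    (hLip : ∀ (V : C(ℝ, EuclideanSpace ℝ (Fin d))) (x y : EuclideanSpace ℝ (Fin d)),
      ‖G (V + ContinuousMap.const ℝ x) - G (V + ContinuousMap.const ℝ y)‖ ≤ L * ‖x - y‖)
    (φ : C(ℝ, EuclideanSpace ℝ (Fin d)) → ℝ → EuclideanSpace ℝ (Fin d))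
    (hφ : ∀ W, Continuous (φ W) ∧
      ∀ s : ℝ, φ W s = ∫ v in (0:ℝ)..s, G (pathShift v W + ContinuousMap.const ℝ (φ W v)))
    (Wn : ℕ → C(ℝ, EuclideanSpace ℝ (Fin d))) (W : C(ℝ, EuclideanSpace ℝ (Fin d)))
    (hWn : ∀ K : Set ℝ, IsCompact K →
      TendstoUniformlyOn (fun n u => Wn n u) (fun u => W u) atTop K) :
    (∀ K : Set ℝ, IsCompact K →
      TendstoUniformlyOn (fun n s => φ (Wn n) s) (φ W) atTop K) ∧
    (∀ T : ℝ, 0 < T → ∀ K : Set ℝ, IsCompact K →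
      TendstoUniformlyOn
        (fun n (p : ℝ × ℝ) =>
          (pathShift p.1 (Wn n) + ContinuousMap.const ℝ (φ (Wn n) p.1)) p.2)
        (fun p => (pathShift p.1 W + ContinuousMap.const ℝ (φ W p.1)) p.2)
        atTop (Set.Icc (-T) T ×ˢ K)) :=
  stmt_3_general d G hGc L hL hLip φ hφ Wn W hWn
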